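/- arXiv:2208.07484 — 5 statements merged into one kernel-verified Lean document; each statement's English description precedes it below -/
import Mathlib

section
/- Let G be a finite simple graph that admits a bondage set, and suppose every minimum bondage graph of G admits a bondage set. Let m = min{ b(G − E₁) : E₁ is a minimum bondage set of G }. If m ≤ 2, then Sb₂(G) = b(G) + m. -/
/-- A finite set of vertices `D` is a dominating set of `G` if every vertex
is in `D` or adjacent to a vertex in `D`. -/
def SimpleGraph.IsDominatingSet {V : Type*} (G : SimpleGraph V) (D : Finset V) : Prop :=
  ∀ v : V, v ∈ D ∨ ∃ u ∈ D, G.Adj u v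

/-- The domination number of `G`: the minimum cardinality of a dominating set. -/
noncomputable def SimpleGraph.domNum {V : Type*} (G : SimpleGraph V) : ℕ :=
  sInf {n : ℕ | ∃ D : Finset V, G.IsDominatingSet D ∧ D.card = n}

/-- The `k`-synchronous bondage number of `G`: the minimum cardinality of a set of edges
whose deletion increases the domination number by exactly `k`.  (`Sb 1` is the classical
bondage number.) -/
noncomputable def SimpleGraph.synchBondage {V : Type*} (G : SimpleGraph V) (k : ℕ) : ℕ :=
  sInf {m : ℕ | ∃ E' : Finset (Sym2 V), ↑E' ⊆ G.edgeSet ∧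
    (G.deleteEdges ↑E').domNum = G.domNum + k ∧ E'.card = m}

section Aux

variable {V : Type*} [Fintype V]

lemma aux_exists_min_dom (G : SimpleGraph V) :
    ∃ D : Finset V, G.IsDominatingSet D ∧ D.card = G.domNum := by
  have hne : {n : ℕ | ∃ D : Finset V, G.IsDominatingSet D ∧ D.card = n}.Nonempty :=
    ⟨Finset.univ.card, Finset.univ, fun v => Or.inl (Finset.mem_univ v), rfl⟩
  exact Nat.sInf_mem hne

omit [Fintype V] in
lemma aux_domNum_le_card {G : SimpleGraph V} {D : Finset V} (h : G.IsDominatingSet D) :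
    G.domNum ≤ D.card :=
  Nat.sInf_le ⟨D, h, rfl⟩

lemma aux_domNum_deleteEdges_single_le (G : SimpleGraph V) (e : Sym2 V) :
    (G.deleteEdges {e}).domNum ≤ G.domNum + 1 := by
  classical
  obtain ⟨D, hD, hc⟩ := aux_exists_min_dom G
  induction e using Sym2.ind with
  | _ u v =>
    by_cases hu : u ∈ D
    · have hdom : (G.deleteEdges {s(u,v)}).IsDominatingSet (insert v D) := by
        intro w
        by_cases hw : w = v
        · exact Or.inl (by simp [hw])
        rcases hD w with h | ⟨x, hx, ha⟩
        · exact Or.inl (Finset.mem_insert_of_mem h)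
        by_cases he : s(x,w) = s(u,v)
        · rw [Sym2.eq_iff] at he
          rcases he with ⟨rfl, rfl⟩ | ⟨rfl, rfl⟩
          · exact absurd rfl hw
          · exact Or.inl (Finset.mem_insert_of_mem hu)
        · exact Or.inr ⟨x, Finset.mem_insert_of_mem hx,
            by simp only [SimpleGraph.deleteEdges_adj, Set.mem_singleton_iff]; exact ⟨ha, he⟩⟩
      calc (G.deleteEdges {s(u,v)}).domNum ≤ (insert v D).card := aux_domNum_le_card hdom
        _ ≤ D.card + 1 := Finset.card_insert_le _ _
        _ = G.domNum + 1 := by rw [hc]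
    · have hdom : (G.deleteEdges {s(u,v)}).IsDominatingSet (insert u D) := by
        intro w
        by_cases hw : w = u
        · exact Or.inl (by simp [hw])
        rcases hD w with h | ⟨x, hx, ha⟩
        · exact Or.inl (Finset.mem_insert_of_mem h)
        by_cases he : s(x,w) = s(u,v)
        · rw [Sym2.eq_iff] at he
          rcases he with ⟨rfl, rfl⟩ | ⟨rfl, rfl⟩
          · exact absurd hx hu
          · exact absurd rfl hw
        · exact Or.inr ⟨x, Finset.mem_insert_of_mem hx,
            by simp only [SimpleGraph.deleteEdges_adj, Set.mem_singleton_iff]; exact ⟨ha, he⟩⟩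
      calc (G.deleteEdges {s(u,v)}).domNum ≤ (insert u D).card := aux_domNum_le_card hdom
        _ ≤ D.card + 1 := Finset.card_insert_le _ _
        _ = G.domNum + 1 := by rw [hc]

lemma aux_exists_subset (G : SimpleGraph V) (E' : Finset (Sym2 V))
    (h : G.domNum + 1 ≤ (G.deleteEdges ↑E').domNum) :
    ∃ F : Finset (Sym2 V), F ⊆ E' ∧ (G.deleteEdges ↑F).domNum = G.domNum + 1 := by
  classical
  induction E' using Finset.strongInduction with
  | _ E' ih =>
    by_cases heq : (G.deleteEdges ↑E').domNum = G.domNum + 1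
    · exact ⟨E', subset_rfl, heq⟩
    · have hne : E'.Nonempty := by
        rcases E'.eq_empty_or_nonempty with rfl | h'
        · simp at h
        · exact h'
      obtain ⟨e, he⟩ := hne
      have hsplit : (↑(E'.erase e) : Set (Sym2 V)) ∪ {e} = (↑E' : Set (Sym2 V)) := by
        rw [Set.union_singleton, ← Finset.coe_insert, Finset.insert_erase he]
      have key : (G.deleteEdges ↑E').domNum ≤ (G.deleteEdges ↑(E'.erase e)).domNum + 1 := by
        have h2 := aux_domNum_deleteEdges_single_le (G.deleteEdges ↑(E'.erase e)) e
        rwa [SimpleGraph.deleteEdges_deleteEdges, hsplit] at h2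
      have h'' : G.domNum + 1 ≤ (G.deleteEdges ↑(E'.erase e)).domNum := by omega
      obtain ⟨F, hF, hFd⟩ := ih (E'.erase e) (Finset.erase_ssubset he) h''
      exact ⟨F, hF.trans (Finset.erase_subset _ _), hFd⟩

end Aux

/-- if `G` admits a bondage set, every minimum bondage graph of `G` admits a
bondage set, and `m`, the minimum bondage number over all minimum bondage graphs of `G`,
satisfies `m ≤ 2`, then `Sb₂(G) = b(G) + m`. -/
theorem synchBondage_two_eq_of_min_bondage_le_two {V : Type*} [Fintype V] (G : SimpleGraph V)
    (hG : ∃ E' : Finset (Sym2 V), ↑E' ⊆ G.edgeSet ∧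
      (G.deleteEdges ↑E').domNum = G.domNum + 1)
    (hMBG : ∀ E₁ : Finset (Sym2 V), ↑E₁ ⊆ G.edgeSet →
      (G.deleteEdges ↑E₁).domNum = G.domNum + 1 → E₁.card = G.synchBondage 1 →
      ∃ E'' : Finset (Sym2 V), ↑E'' ⊆ (G.deleteEdges ↑E₁).edgeSet ∧
        ((G.deleteEdges ↑E₁).deleteEdges ↑E'').domNum = (G.deleteEdges ↑E₁).domNum + 1)
    (m : ℕ)
    (hm : m = sInf {x : ℕ | ∃ E₁ : Finset (Sym2 V), ↑E₁ ⊆ G.edgeSet ∧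
      (G.deleteEdges ↑E₁).domNum = G.domNum + 1 ∧ E₁.card = G.synchBondage 1 ∧
      (G.deleteEdges ↑E₁).synchBondage 1 = x})
    (hm2 : m ≤ 2) :
    G.synchBondage 2 = G.synchBondage 1 + m := by
  classical
  have hSb1 : G.synchBondage 1 = sInf {m : ℕ | ∃ E' : Finset (Sym2 V), ↑E' ⊆ G.edgeSet ∧
      (G.deleteEdges ↑E').domNum = G.domNum + 1 ∧ E'.card = m} := rfl
  have hSb2 : G.synchBondage 2 = sInf {m : ℕ | ∃ E' : Finset (Sym2 V), ↑E' ⊆ G.edgeSet ∧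
      (G.deleteEdges ↑E').domNum = G.domNum + 2 ∧ E'.card = m} := rfl
  -- Sb1 set is nonempty; extract a minimum bondage set Ea
  obtain ⟨E0, hE0sub, hE0dom⟩ := hG
  have hS1ne : {m : ℕ | ∃ E' : Finset (Sym2 V), ↑E' ⊆ G.edgeSet ∧
      (G.deleteEdges ↑E').domNum = G.domNum + 1 ∧ E'.card = m}.Nonempty :=
    ⟨E0.card, E0, hE0sub, hE0dom, rfl⟩
  obtain ⟨Ea, hEa1, hEa2, hEa3⟩ := Nat.sInf_mem hS1ne
  rw [← hSb1] at hEa3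
  -- m-set is nonempty; extract a minimum bondage set E₁ realizing m
  have hMne : {x : ℕ | ∃ E₁ : Finset (Sym2 V), ↑E₁ ⊆ G.edgeSet ∧
      (G.deleteEdges ↑E₁).domNum = G.domNum + 1 ∧ E₁.card = G.synchBondage 1 ∧
      (G.deleteEdges ↑E₁).synchBondage 1 = x}.Nonempty :=
    ⟨(G.deleteEdges ↑Ea).synchBondage 1, Ea, hEa1, hEa2, hEa3, rfl⟩
  obtain ⟨E₁, h11, h12, h13, h14⟩ := hm ▸ Nat.sInf_mem hMne
  -- a minimum bondage set E₂ of G − E₁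
  obtain ⟨Eb, hEb1, hEb2⟩ := hMBG E₁ h11 h12 h13
  have hS1Hne : {x : ℕ | ∃ E'' : Finset (Sym2 V), ↑E'' ⊆ (G.deleteEdges ↑E₁).edgeSet ∧
      ((G.deleteEdges ↑E₁).deleteEdges ↑E'').domNum = (G.deleteEdges ↑E₁).domNum + 1 ∧
      E''.card = x}.Nonempty := ⟨Eb.card, Eb, hEb1, hEb2, rfl⟩
  obtain ⟨E₂, h21, h22, h23⟩ := Nat.sInf_mem hS1Hne
  have h23' : E₂.card = m := by
    rw [h23]; exact h14
  -- upper bound: Sb₂(G) ≤ b + m via E₁ ∪ E₂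
  have hdisj : Disjoint E₁ E₂ := by
    rw [Finset.disjoint_left]
    intro e he1 he2
    have h3 := h21 (Finset.mem_coe.2 he2)
    rw [SimpleGraph.edgeSet_deleteEdges] at h3
    exact h3.2 (Finset.mem_coe.2 he1)
  have hcardU : (E₁ ∪ E₂).card = G.synchBondage 1 + m := by
    rw [Finset.card_union_of_disjoint hdisj, h13, h23']
  have hsubU : (↑(E₁ ∪ E₂) : Set (Sym2 V)) ⊆ G.edgeSet := by
    rw [Finset.coe_union]
    refine Set.union_subset h11 ?_
    intro e he
    have h3 := h21 he
    rw [SimpleGraph.edgeSet_deleteEdges] at h3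
    exact h3.1
  have hdomU : (G.deleteEdges ↑(E₁ ∪ E₂)).domNum = G.domNum + 2 := by
    rw [Finset.coe_union, ← SimpleGraph.deleteEdges_deleteEdges, h22, h12]
  have hle : G.synchBondage 2 ≤ G.synchBondage 1 + m := by
    rw [hSb2]
    exact Nat.sInf_le ⟨E₁ ∪ E₂, hsubU, hdomU, hcardU⟩
  -- lower bound
  have hS2ne : {m : ℕ | ∃ E' : Finset (Sym2 V), ↑E' ⊆ G.edgeSet ∧
      (G.deleteEdges ↑E').domNum = G.domNum + 2 ∧ E'.card = m}.Nonempty :=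
    ⟨(E₁ ∪ E₂).card, E₁ ∪ E₂, hsubU, hdomU, rfl⟩
  obtain ⟨E', hE'sub, hE'dom, hE'card⟩ := Nat.sInf_mem hS2ne
  rw [← hSb2] at hE'card
  obtain ⟨F, hFE, hFdom⟩ := aux_exists_subset G E' (by rw [hE'dom]; omega)
  have hFsub : (↑F : Set (Sym2 V)) ⊆ G.edgeSet :=
    Set.Subset.trans (Finset.coe_subset.2 hFE) hE'sub
  have hbF : G.synchBondage 1 ≤ F.card := by
    rw [hSb1]
    exact Nat.sInf_le ⟨F, hFsub, hFdom, rfl⟩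
  have hFne : F ≠ E' := by
    intro h
    rw [h, hE'dom] at hFdom
    omega
  have hE''ne : (E' \ F).Nonempty := by
    rw [Finset.sdiff_nonempty]
    intro hsub
    exact hFne (Finset.Subset.antisymm hFE hsub)
  have hE''card : (E' \ F).card = E'.card - F.card := Finset.card_sdiff_of_subset hFE
  have hFle : F.card ≤ E'.card := Finset.card_le_card hFE
  have hdel : (G.deleteEdges ↑F).deleteEdges ↑(E' \ F) = G.deleteEdges ↑E' := by
    rw [SimpleGraph.deleteEdges_deleteEdges, ← Finset.coe_union,
      Finset.union_sdiff_of_subset hFE]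
  have hE''sub : (↑(E' \ F) : Set (Sym2 V)) ⊆ (G.deleteEdges ↑F).edgeSet := by
    rw [SimpleGraph.edgeSet_deleteEdges]
    intro e he
    rw [Finset.mem_coe, Finset.mem_sdiff] at he
    exact ⟨hE'sub (Finset.mem_coe.2 he.1), fun h => he.2 (Finset.mem_coe.1 h)⟩
  have hbond : (G.deleteEdges ↑F).synchBondage 1 ≤ (E' \ F).card := by
    refine Nat.sInf_le ⟨E' \ F, hE''sub, ?_, rfl⟩
    rw [hdel, hE'dom, hFdom]
  have hE''pos : 0 < (E' \ F).card := Finset.card_pos.2 hE''ne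
  by_cases hFb : F.card = G.synchBondage 1
  · have hmle : m ≤ (G.deleteEdges ↑F).synchBondage 1 := by
      rw [hm]
      exact Nat.sInf_le ⟨F, hFsub, hFdom, hFb, rfl⟩
    omega
  · omega
end

section
/- For every integer n ≥ 2, the bondage number of the path on n vertices is b(P_n) = 2 if n ≡ 1 (mod 3), and b(P_n) = 1 otherwise. -/
/-!
A vertex of a subgraph of `P_n` dominates at most three vertices, and an isolated vertex only
itself, so a dominating set of a subgraph of `P_n` with `i` isolated vertices has at least
`⌈(n + 2i) / 3⌉` elements. Taking every third vertex of each segment that survives the deletion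
shows that this bound is attained when nothing, the first edge, or the first two edges are
deleted, and that deleting the edge that splits `P_n` into `P_a` and `P_b` leaves domination
number at most `⌈a / 3⌉ + ⌈b / 3⌉`. So deleting the first edge raises `γ(P_n) = ⌈n / 3⌉` unless
`n ≡ 1 (mod 3)`; in that case `⌈a / 3⌉ + ⌈b / 3⌉ ≤ ⌈n / 3⌉` whenever `a + b = n`, so no single
edge suffices, while isolating the first two vertices does.
-/

open Finset SimpleGraph

namespace SimpleGraph

section

variable {V : Type*} {G : SimpleGraph V}

lemma IsDominatingSet.domNum_le {D : Finset V} (hD : G.IsDominatingSet D) : G.domNum ≤ #D :=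
  Nat.sInf_le ⟨D, hD, rfl⟩

lemma exists_isDominatingSet_card_eq_domNum [Fintype V] (G : SimpleGraph V) :
    ∃ D : Finset V, G.IsDominatingSet D ∧ #D = G.domNum :=
  Nat.sInf_mem (s := {n | ∃ D : Finset V, G.IsDominatingSet D ∧ #D = n})
    ⟨_, univ, fun v => Or.inl (mem_univ v), rfl⟩

lemma IsDominatingSet.mem_of_forall_not_adj {D : Finset V} (hD : G.IsDominatingSet D) {v : V}
    (hv : ∀ u, ¬ G.Adj u v) : v ∈ D :=
  (hD v).resolve_right fun ⟨u, _, huv⟩ => hv u huv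

lemma synchBondage_eq_card {k : ℕ} {E : Finset (Sym2 V)}
    (hE : ↑E ⊆ G.edgeSet) (hEk : (G.deleteEdges ↑E).domNum = G.domNum + k)
    (hmin : ∀ E' : Finset (Sym2 V), ↑E' ⊆ G.edgeSet → #E' < #E →
      (G.deleteEdges ↑E').domNum ≠ G.domNum + k) :
    G.synchBondage k = #E :=
  le_antisymm (Nat.sInf_le ⟨E, hE, hEk, rfl⟩) <|
    le_csInf ⟨_, E, hE, hEk, rfl⟩ fun _ ⟨E', hE', hE'k, hcard⟩ =>
      hcard ▸ not_lt.1 fun hlt => hmin E' hE' hlt hE'k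

section Finite

variable [Fintype V] [DecidableEq V] [DecidableRel G.Adj]

lemma IsDominatingSet.card_le_sum_degree {D : Finset V} (hD : G.IsDominatingSet D) :
    Fintype.card V ≤ ∑ v ∈ D, (G.degree v + 1) :=
  calc Fintype.card V
      ≤ #(D.biUnion fun v => insert v (G.neighborFinset v)) := by
        rw [← card_univ]
        refine card_le_card fun v _ => ?_
        rcases hD v with hv | ⟨u, hu, huv⟩
        · exact mem_biUnion.2 ⟨v, hv, mem_insert_self _ _⟩
        · exact mem_biUnion.2 ⟨u, hu, mem_insert_of_mem ((mem_neighborFinset _ _ _).2 huv)⟩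
    _ ≤ ∑ v ∈ D, #(insert v (G.neighborFinset v)) := card_biUnion_le
    _ ≤ ∑ v ∈ D, (G.degree v + 1) := sum_le_sum fun v _ => card_insert_le _ _

lemma IsDominatingSet.card_add_mul_le {k : ℕ} (hdeg : ∀ v, G.degree v ≤ k) {D I : Finset V}
    (hD : G.IsDominatingSet D) (hI : ∀ v ∈ I, ∀ u, ¬ G.Adj u v) :
    Fintype.card V + k * #I ≤ (k + 1) * #D := by
  have hID : I ⊆ D := fun v hv => hD.mem_of_forall_not_adj (hI v hv)
  have hdegI : ∀ v ∈ I, G.degree v = 0 := fun v hv =>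
    card_eq_zero.2 <| eq_empty_of_forall_notMem fun u hu =>
      hI v hv u ((mem_neighborFinset _ _ _).1 hu).symm
  have hsum : ∑ v ∈ D, (G.degree v + 1) ≤ (k + 1) * #(D \ I) + #I := by
    rw [← sum_sdiff hID]
    gcongr
    · calc ∑ v ∈ D \ I, (G.degree v + 1) ≤ ∑ _v ∈ D \ I, (k + 1) :=
            sum_le_sum fun v _ => Nat.succ_le_succ (hdeg v)
        _ = (k + 1) * #(D \ I) := by rw [sum_const, smul_eq_mul, mul_comm]
    · rw [sum_congr rfl fun v hv => by rw [hdegI v hv], sum_const, smul_eq_mul, zero_add, mul_one]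
  have := hD.card_le_sum_degree
  rw [← card_sdiff_add_card_eq_card hID]
  linarith

end Finite

end

lemma degree_le_two_of_le_pathGraph {n : ℕ} {G : SimpleGraph (Fin n)} [DecidableRel G.Adj]
    (hG : G ≤ pathGraph n) (v : Fin n) : G.degree v ≤ 2 :=
  calc G.degree v ≤ #({v.val - 1, v.val + 1} : Finset ℕ) := by
        refine card_le_card_of_injOn Fin.val (fun u hu => ?_) Fin.val_injective.injOn
        have := pathGraph_adj.1 (hG ((mem_neighborFinset _ _ _).1 hu))
        simp only [coe_insert, coe_singleton, Set.mem_insert_iff, Set.mem_singleton_iff]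
        omega
    _ ≤ 2 := card_le_two

lemma exists_dominating_segment {n : ℕ} (s : Set (Sym2 (Fin n))) {a b : ℕ} (hb : b ≤ n)
    (hs : ∀ u v : Fin n, a ≤ u.val → u.val + 1 = v.val → v.val < b → s(u, v) ∉ s) :
    ∃ D : Finset (Fin n), #D ≤ (b - a + 2) / 3 ∧ ∀ v : Fin n, a ≤ v.val → v.val < b →
      v ∈ D ∨ ∃ u ∈ D, ((pathGraph n).deleteEdges s).Adj u v := by
  -- the vertices `a + 1, a + 4, a + 7, …`, the last one moved back into the segment if needed
  set c : ℕ → ℕ := fun j => min (a + 3 * j + 1) (b - 1)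
  set D₀ := (range ((b - a + 2) / 3)).image c
  have hD₀ : ∀ m ∈ D₀, m < n := by
    simp only [D₀, c, mem_image, mem_range]
    rintro m ⟨j, hj, rfl⟩
    omega
  refine ⟨D₀.attachFin hD₀, ?_, fun v hav hvb => ?_⟩
  · rw [card_attachFin]
    exact card_image_le.trans (card_range _).le
  have hc : c ((v - a) / 3) ∈ D₀ := mem_image_of_mem c (mem_range.2 (by omega))
  set u : Fin n := ⟨c ((v - a) / 3), hD₀ _ hc⟩
  have hu : u ∈ D₀.attachFin hD₀ := (mem_attachFin hD₀).2 hc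
  have hval : u.val = min (a + 3 * ((v.val - a) / 3) + 1) (b - 1) := rfl
  by_cases huv : u = v
  · exact Or.inl (huv ▸ hu)
  rw [Fin.ext_iff] at huv
  refine Or.inr ⟨u, hu, deleteEdges_adj.2 ⟨pathGraph_adj.2 (by omega), ?_⟩⟩
  rcases (by omega : u.val + 1 = v.val ∨ v.val + 1 = u.val) with h | h
  · exact hs u v (by omega) h hvb
  · rw [Sym2.eq_swap]
    exact hs v u hav h (by omega)

lemma domNum_deleteEdges_pathGraph_le {n : ℕ} (s : Set (Sym2 (Fin n))) {c d : ℕ} (hcd : c ≤ d)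
    (hd : d ≤ n) (hs : ∀ u v : Fin n, u.val + 1 = v.val → s(u, v) ∈ s → v.val = c ∨ v.val = d) :
    ((pathGraph n).deleteEdges s).domNum ≤ (c + 2) / 3 + (d - c + 2) / 3 + (n - d + 2) / 3 := by
  obtain ⟨D₁, hD₁, h₁⟩ := exists_dominating_segment s (a := 0) (b := c) (by omega)
    fun u v _ huv hv hmem => by have := hs u v huv hmem; omega
  obtain ⟨D₂, hD₂, h₂⟩ := exists_dominating_segment s (a := c) (b := d) hd
    fun u v hu huv hv hmem => by have := hs u v huv hmem; omega
  obtain ⟨D₃, hD₃, h₃⟩ := exists_dominating_segment s (a := d) (b := n) le_rfl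
    fun u v hu huv _ hmem => by have := hs u v huv hmem; omega
  classical
  set G := (pathGraph n).deleteEdges s
  have hD : G.IsDominatingSet (D₁ ∪ D₂ ∪ D₃) := by
    intro v
    have mono : ∀ {D}, D ⊆ D₁ ∪ D₂ ∪ D₃ → (v ∈ D ∨ ∃ u ∈ D, G.Adj u v) →
        v ∈ D₁ ∪ D₂ ∪ D₃ ∨ ∃ u ∈ D₁ ∪ D₂ ∪ D₃, G.Adj u v :=
      fun hsub => Or.imp (@hsub v) fun ⟨u, hu, huv⟩ => ⟨u, hsub hu, huv⟩
    rcases (by omega : v.val < c ∨ c ≤ v.val ∧ v.val < d ∨ d ≤ v.val) with h | h | h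
    · exact mono (fun x hx => by simp [hx]) (h₁ v (Nat.zero_le _) h)
    · exact mono (fun x hx => by simp [hx]) (h₂ v h.1 h.2)
    · exact mono (fun x hx => by simp [hx]) (h₃ v h v.isLt)
  have := card_union_le D₁ D₂
  have := card_union_le (D₁ ∪ D₂) D₃
  have := hD.domNum_le
  omega

lemma le_domNum_deleteEdges_pathGraph {n : ℕ} (s : Set (Sym2 (Fin n))) (I : Finset (Fin n))
    (hI : ∀ v ∈ I, ∀ u, ¬ ((pathGraph n).deleteEdges s).Adj u v) :
    (n + 2 * #I + 2) / 3 ≤ ((pathGraph n).deleteEdges s).domNum := by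
  classical
  obtain ⟨D, hD, hcard⟩ := exists_isDominatingSet_card_eq_domNum ((pathGraph n).deleteEdges s)
  have := hD.card_add_mul_le (degree_le_two_of_le_pathGraph (deleteEdges_le s)) hI
  rw [Fintype.card_fin] at this
  omega

theorem domNum_pathGraph (n : ℕ) : (pathGraph n).domNum = (n + 2) / 3 := by
  have hle := domNum_deleteEdges_pathGraph_le ∅ (Nat.zero_le n) le_rfl
    fun _ _ _ h => absurd h (Set.notMem_empty _)
  have hge := le_domNum_deleteEdges_pathGraph (n := n) ∅ ∅ fun _ h => absurd h (notMem_empty _)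
  rw [deleteEdges_empty] at hle hge
  rw [card_empty] at hge
  omega

lemma domNum_deleteEdges_pathGraph_first_edge {n : ℕ} {v₀ v₁ : Fin n} (h₀ : v₀.val = 0)
    (h₁ : v₁.val = 1) : ((pathGraph n).deleteEdges {s(v₀, v₁)}).domNum = (n + 4) / 3 := by
  have hle := domNum_deleteEdges_pathGraph_le {s(v₀, v₁)} (c := 1) (d := n) (by omega) le_rfl
    fun u v huv h => by
      simp only [Set.mem_singleton_iff, Sym2.eq_iff, Fin.ext_iff] at h
      omega
  have hge := le_domNum_deleteEdges_pathGraph {s(v₀, v₁)} {v₀} fun v hv u h => by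
    rw [mem_singleton] at hv
    subst hv
    simp only [deleteEdges_adj, pathGraph_adj, Set.mem_singleton_iff, Sym2.eq_iff,
      Fin.ext_iff, and_true] at h
    omega
  rw [card_singleton] at hge
  omega

lemma domNum_deleteEdges_pathGraph_first_two_edges {n : ℕ} {v₀ v₁ v₂ : Fin n} (h₀ : v₀.val = 0)
    (h₁ : v₁.val = 1) (h₂ : v₂.val = 2) :
    ((pathGraph n).deleteEdges {s(v₀, v₁), s(v₁, v₂)}).domNum = (n + 6) / 3 := by
  have hle := domNum_deleteEdges_pathGraph_le {s(v₀, v₁), s(v₁, v₂)} (c := 1) (d := 2)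
    (by omega) (by omega) fun u v huv h => by
      simp only [Set.mem_insert_iff, Set.mem_singleton_iff, Sym2.eq_iff, Fin.ext_iff] at h
      omega
  have hge := le_domNum_deleteEdges_pathGraph {s(v₀, v₁), s(v₁, v₂)} {v₀, v₁} fun v hv u h => by
    rw [mem_insert, mem_singleton] at hv
    simp only [deleteEdges_adj, pathGraph_adj, Set.mem_insert_iff, Set.mem_singleton_iff,
      Sym2.eq_iff, Fin.ext_iff] at h
    rcases hv with rfl | rfl <;> omega
  rw [card_pair (by simp [Fin.ext_iff, h₀, h₁])] at hge
  omega

lemma domNum_deleteEdges_pathGraph_le_of_card_le_one {n : ℕ} (hn : n % 3 = 1)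
    {E : Finset (Sym2 (Fin n))} (hE : ↑E ⊆ (pathGraph n).edgeSet) (hcard : #E ≤ 1) :
    ((pathGraph n).deleteEdges ↑E).domNum ≤ (n + 2) / 3 := by
  obtain h0 | h1 := Nat.le_one_iff_eq_zero_or_eq_one.1 hcard
  · rw [card_eq_zero.1 h0, coe_empty, deleteEdges_empty, domNum_pathGraph]
  obtain ⟨e, rfl⟩ := card_eq_one.1 h1
  rw [coe_singleton, Set.singleton_subset_iff] at hE
  rw [coe_singleton]
  clear hcard h1
  induction e using Sym2.ind with | h x y => ?_
  wlog hxy : x.val + 1 = y.val generalizing x y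
  · rw [Sym2.eq_swap] at hE ⊢
    exact this y x hE (by have := pathGraph_adj.1 ((mem_edgeSet _).1 hE); omega)
  have := domNum_deleteEdges_pathGraph_le {s(x, y)} (c := y.val) (d := n) y.isLt.le le_rfl
    fun u v huv h => by
      simp only [Set.mem_singleton_iff, Sym2.eq_iff, Fin.ext_iff] at h
      omega
  omega

lemma mk_mem_edgeSet_pathGraph {n : ℕ} {u v : Fin n} (h : u.val + 1 = v.val) :
    s(u, v) ∈ (pathGraph n).edgeSet :=
  (mem_edgeSet _).2 (pathGraph_adj.2 (Or.inl h))

lemma synchBondage_one_pathGraph_of_mod_three_eq_one {n : ℕ} (hn : 2 ≤ n) (h3 : n % 3 = 1) :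
    (pathGraph n).synchBondage 1 = 2 := by
  obtain ⟨v₀, v₁, v₂, h₀, h₁, h₂⟩ : ∃ v₀ v₁ v₂ : Fin n, v₀.val = 0 ∧ v₁.val = 1 ∧ v₂.val = 2 :=
    ⟨⟨0, by omega⟩, ⟨1, by omega⟩, ⟨2, by omega⟩, rfl, rfl, rfl⟩
  have hcard : #{s(v₀, v₁), s(v₁, v₂)} = 2 := card_pair (by simp [Fin.ext_iff, h₀, h₁, h₂])
  refine (synchBondage_eq_card ?_ ?_ fun E' hE' hlt => ?_).trans hcard
  · rw [coe_pair, Set.insert_subset_iff, Set.singleton_subset_iff]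
    exact ⟨mk_mem_edgeSet_pathGraph (by omega), mk_mem_edgeSet_pathGraph (by omega)⟩
  · rw [coe_pair, domNum_deleteEdges_pathGraph_first_two_edges h₀ h₁ h₂, domNum_pathGraph]
    omega
  · have := domNum_deleteEdges_pathGraph_le_of_card_le_one h3 hE' (by omega)
    rw [domNum_pathGraph]
    omega

lemma synchBondage_one_pathGraph_of_mod_three_ne_one {n : ℕ} (hn : 2 ≤ n) (h3 : n % 3 ≠ 1) :
    (pathGraph n).synchBondage 1 = 1 := by
  obtain ⟨v₀, v₁, h₀, h₁⟩ : ∃ v₀ v₁ : Fin n, v₀.val = 0 ∧ v₁.val = 1 :=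
    ⟨⟨0, by omega⟩, ⟨1, by omega⟩, rfl, rfl⟩
  refine (synchBondage_eq_card (E := {s(v₀, v₁)}) ?_ ?_ fun E' _ hlt => ?_).trans
    (card_singleton _)
  · rw [coe_singleton, Set.singleton_subset_iff]
    exact mk_mem_edgeSet_pathGraph (by omega)
  · rw [coe_singleton, domNum_deleteEdges_pathGraph_first_edge h₀ h₁, domNum_pathGraph]
    omega
  · rw [card_singleton, Nat.lt_one_iff, card_eq_zero] at hlt
    rw [hlt, coe_empty, deleteEdges_empty]
    omega

end SimpleGraph

/-- the bondage number of the path `P_n` (`n ≥ 2`) is `2` if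
`n ≡ 1 (mod 3)` and `1` otherwise. -/
theorem bondage_pathGraph (n : ℕ) (hn : 2 ≤ n) :
    (SimpleGraph.pathGraph n).synchBondage 1 = if n % 3 = 1 then 2 else 1 := by
  split_ifs with h3
  · exact synchBondage_one_pathGraph_of_mod_three_eq_one hn h3
  · exact synchBondage_one_pathGraph_of_mod_three_ne_one hn h3
end

section
/- Let G = (V,E) be a finite simple graph with distinct vertices r, a, b ∈ V such that ra, rb ∈ E and deg(a) = deg(b) = 1 (i.e., ra and rb are pendant edges). Then γ(G − ra) = γ(G) + 1; consequently the bondage number of G equals 1. -/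
lemma aux_domNum_le_card_s10 {V : Type*} (H : SimpleGraph V) (D : Finset V)
    (hD : H.IsDominatingSet D) : H.domNum ≤ D.card :=
  Nat.sInf_le ⟨D, hD, rfl⟩

lemma aux_domNum_exists {V : Type*} [Fintype V] (H : SimpleGraph V) :
    ∃ D : Finset V, H.IsDominatingSet D ∧ D.card = H.domNum := by
  have hne : {n : ℕ | ∃ D : Finset V, H.IsDominatingSet D ∧ D.card = n}.Nonempty :=
    ⟨Finset.univ.card, Finset.univ, fun v => Or.inl (Finset.mem_univ v), rfl⟩
  exact Nat.sInf_mem hne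

/-- if `ra` and `rb` are pendant edges (with `a ≠ b`), then deleting `ra`
increases the domination number by one; consequently the bondage number of `G` is `1`. -/
theorem bondage_eq_one_of_two_pendant {V : Type*} [Fintype V] [DecidableEq V]
    (G : SimpleGraph V) [DecidableRel G.Adj] (r a b : V)
    (hra : r ≠ a) (hrb : r ≠ b) (hab : a ≠ b)
    (hadj1 : G.Adj r a) (hadj2 : G.Adj r b)
    (hda : G.degree a = 1) (hdb : G.degree b = 1) :
    (G.deleteEdges {s(r, a)}).domNum = G.domNum + 1 ∧ G.synchBondage 1 = 1 := by
  classical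
  -- unique neighbor facts
  have uniq : ∀ (x y : V), G.degree x = 1 → G.Adj y x → ∀ u, G.Adj u x → u = y := by
    intro x y hdx hyx u hux
    have hmu : u ∈ G.neighborFinset x := by
      rw [SimpleGraph.mem_neighborFinset]; exact hux.symm
    have hmy : y ∈ G.neighborFinset x := by
      rw [SimpleGraph.mem_neighborFinset]; exact hyx.symm
    obtain ⟨z, hz⟩ := Finset.card_eq_one.mp hdx
    rw [hz, Finset.mem_singleton] at hmu hmy
    rw [hmu, hmy]
  have hNa : ∀ u, G.Adj u a → u = r := uniq a r hda hadj1
  have hNb : ∀ u, G.Adj u b → u = r := uniq b r hdb hadj2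
  set G' := G.deleteEdges {s(r, a)} with hG'
  have hG'adj : ∀ u v : V, G'.Adj u v ↔ G.Adj u v ∧ ¬(s(u, v) = s(r, a)) := by
    intro u v
    simp [hG', SimpleGraph.deleteEdges_adj]
  have hsym : ∀ u v : V, (s(u, v) : Sym2 V) = s(r, a) ↔ (u = r ∧ v = a) ∨ (u = a ∧ v = r) :=
    fun u v => Sym2.eq_iff
  -- a is isolated in G'
  have hiso : ∀ u, ¬ G'.Adj u a := by
    intro u hu
    rw [hG'adj] at hu
    obtain ⟨hadj, hne⟩ := hu
    have := hNa u hadj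
    subst this
    exact hne rfl
  -- main equality
  have hmain : G'.domNum = G.domNum + 1 := by
    apply le_antisymm
    · -- ≤ : from a dominating set D of G build one of G' of size ≤ |D|+1
      obtain ⟨D, hD, hcard⟩ := aux_domNum_exists G
      by_cases haD : a ∈ D
      · have hdom : G'.IsDominatingSet (insert r D) := by
          intro v
          rcases hD v with hv | ⟨u, hu, huv⟩
          · exact Or.inl (Finset.mem_insert_of_mem hv)
          · by_cases he : (s(u, v) : Sym2 V) = s(r, a)
            · rcases (hsym u v).mp he with ⟨hur, hva⟩ | ⟨hua, hvr⟩
              · exact Or.inl (by rw [hva]; exact Finset.mem_insert_of_mem haD)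
              · exact Or.inl (by rw [hvr]; exact Finset.mem_insert_self r D)
            · exact Or.inr ⟨u, Finset.mem_insert_of_mem hu, (hG'adj u v).mpr ⟨huv, he⟩⟩
        calc G'.domNum ≤ (insert r D).card := aux_domNum_le_card_s10 G' _ hdom
          _ ≤ D.card + 1 := Finset.card_insert_le _ _
          _ = G.domNum + 1 := by rw [hcard]
      · have hdom : G'.IsDominatingSet (insert a D) := by
          intro v
          rcases hD v with hv | ⟨u, hu, huv⟩
          · exact Or.inl (Finset.mem_insert_of_mem hv)
          · by_cases he : (s(u, v) : Sym2 V) = s(r, a)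
            · rcases (hsym u v).mp he with ⟨hur, hva⟩ | ⟨hua, hvr⟩
              · exact Or.inl (by rw [hva]; exact Finset.mem_insert_self a D)
              · exact absurd (hua ▸ hu) haD
            · exact Or.inr ⟨u, Finset.mem_insert_of_mem hu, (hG'adj u v).mpr ⟨huv, he⟩⟩
        calc G'.domNum ≤ (insert a D).card := aux_domNum_le_card_s10 G' _ hdom
          _ ≤ D.card + 1 := Finset.card_insert_le _ _
          _ = G.domNum + 1 := by rw [hcard]
    · -- ≥ : from a dominating set D' of G' build one of G of size ≤ |D'|-1
      obtain ⟨D', hD', hcard'⟩ := aux_domNum_exists G'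
      have haD' : a ∈ D' := by
        rcases hD' a with h | ⟨u, _, hu⟩
        · exact h
        · exact absurd hu (hiso u)
      by_cases hrD' : r ∈ D'
      · have hdom : G.IsDominatingSet (D'.erase a) := by
          intro v
          by_cases hva : v = a
          · subst hva
            exact Or.inr ⟨r, Finset.mem_erase.mpr ⟨hra, hrD'⟩, hadj1⟩
          · rcases hD' v with hv | ⟨u, hu, huv⟩
            · exact Or.inl (Finset.mem_erase.mpr ⟨hva, hv⟩)
            · have hua : u ≠ a := by
                intro h; subst h
                exact hiso v huv.symm
              exact Or.inr ⟨u, Finset.mem_erase.mpr ⟨hua, hu⟩, ((hG'adj u v).mp huv).1⟩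
        have h1 : G.domNum ≤ (D'.erase a).card := aux_domNum_le_card_s10 G _ hdom
        have h2 : (D'.erase a).card = D'.card - 1 := Finset.card_erase_of_mem haD'
        have h3 : 1 ≤ D'.card := Finset.card_pos.mpr ⟨a, haD'⟩
        omega
      · have hbD' : b ∈ D' := by
          rcases hD' b with h | ⟨u, hu, hub⟩
          · exact h
          · have := hNb u ((hG'adj u b).mp hub).1
            subst this
            exact absurd hu hrD'
        have hdom : G.IsDominatingSet (insert r ((D'.erase a).erase b)) := by
          intro v
          by_cases hva : v = a
          · subst hva; exact Or.inr ⟨r, Finset.mem_insert_self _ _, hadj1⟩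
          · by_cases hvb : v = b
            · subst hvb; exact Or.inr ⟨r, Finset.mem_insert_self _ _, hadj2⟩
            · by_cases hvr : v = r
              · subst hvr; exact Or.inl (Finset.mem_insert_self _ _)
              · rcases hD' v with hv | ⟨u, hu, huv⟩
                · exact Or.inl (Finset.mem_insert_of_mem
                    (Finset.mem_erase.mpr ⟨hvb, Finset.mem_erase.mpr ⟨hva, hv⟩⟩))
                · have hGuv : G.Adj u v := ((hG'adj u v).mp huv).1
                  have hua : u ≠ a := by
                    intro h; subst h; exact hiso v huv.symm
                  have hub : u ≠ b := by
                    intro h; subst h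
                    exact hvr (hNb v hGuv.symm)
                  exact Or.inr ⟨u, Finset.mem_insert_of_mem
                    (Finset.mem_erase.mpr ⟨hub, Finset.mem_erase.mpr ⟨hua, hu⟩⟩), hGuv⟩
        have h1 : G.domNum ≤ (insert r ((D'.erase a).erase b)).card :=
          aux_domNum_le_card_s10 G _ hdom
        have h2 : (insert r ((D'.erase a).erase b)).card ≤ ((D'.erase a).erase b).card + 1 :=
          Finset.card_insert_le _ _
        have hbea : b ∈ D'.erase a := Finset.mem_erase.mpr ⟨hab.symm, hbD'⟩
        have h3 : ((D'.erase a).erase b).card = (D'.erase a).card - 1 :=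
          Finset.card_erase_of_mem hbea
        have h4 : (D'.erase a).card = D'.card - 1 := Finset.card_erase_of_mem haD'
        have h5 : 1 ≤ (D'.erase a).card := Finset.card_pos.mpr ⟨b, hbea⟩
        have h6 : 1 ≤ D'.card := Finset.card_pos.mpr ⟨a, haD'⟩
        omega
  refine ⟨hmain, ?_⟩
  -- bondage number
  have hmem : 1 ∈ {m : ℕ | ∃ E' : Finset (Sym2 V), ↑E' ⊆ G.edgeSet ∧
      (G.deleteEdges ↑E').domNum = G.domNum + 1 ∧ E'.card = m} := by
    refine ⟨{s(r, a)}, ?_, ?_, Finset.card_singleton _⟩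
    · intro e he
      simp only [Finset.coe_singleton, Set.mem_singleton_iff] at he
      subst he
      exact hadj1
    · rw [Finset.coe_singleton]
      exact hmain
  have hne : {m : ℕ | ∃ E' : Finset (Sym2 V), ↑E' ⊆ G.edgeSet ∧
      (G.deleteEdges ↑E').domNum = G.domNum + 1 ∧ E'.card = m}.Nonempty := ⟨1, hmem⟩
  have hle : G.synchBondage 1 ≤ 1 := Nat.sInf_le hmem
  have hzero : G.synchBondage 1 ≠ 0 := by
    intro h0
    have := Nat.sInf_mem hne
    rw [SimpleGraph.synchBondage] at h0
    rw [h0] at this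
    obtain ⟨E', _, hdom0, hcard0⟩ := this
    have hE' : E' = ∅ := Finset.card_eq_zero.mp hcard0
    subst hE'
    rw [Finset.coe_empty, SimpleGraph.deleteEdges_empty] at hdom0
    omega
  omega
end

section
/- Let G = (V,E) be a finite simple graph and let R ⊆ V be a nonempty set of vertices each of which is adjacent to at least two vertices of degree 1. Let A = { a ∈ V : deg(a) = 1 and a is adjacent to some vertex of R }. Then Sb_{|A|−|R|}(G) = |A| − |R|; that is, there is a set of |A| − |R| edges whose removal increases the domination number by |A| − |R|, and no smaller edge set does so. -/
open Finset
lemma domNum_spec {V : Type*} [Fintype V] (G : SimpleGraph V) :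
    ∃ D : Finset V, G.IsDominatingSet D ∧ D.card = G.domNum := by
  have hne : (Finset.univ.card : ℕ) ∈ {n : ℕ | ∃ D : Finset V, G.IsDominatingSet D ∧ D.card = n} :=
    ⟨Finset.univ, fun v => Or.inl (mem_univ v), rfl⟩
  obtain ⟨D, hD, hcard⟩ := Nat.sInf_mem ⟨_, hne⟩
  exact ⟨D, hD, hcard⟩

lemma domNum_le {V : Type*} (G : SimpleGraph V) {D : Finset V} (h : G.IsDominatingSet D) :
    G.domNum ≤ D.card :=
  Nat.sInf_le ⟨D, h, rfl⟩

lemma domNum_deleteEdges_le {V : Type*} [Fintype V] [DecidableEq V] (G : SimpleGraph V)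
    (E' : Finset (Sym2 V)) :
    (G.deleteEdges ↑E').domNum ≤ G.domNum + E'.card := by
  classical
  obtain ⟨D, hD, hcard⟩ := domNum_spec G
  set G' := G.deleteEdges (↑E' : Set (Sym2 V)) with hG'
  set Rsc : Finset V := Finset.univ.filter (fun v => v ∉ D ∧ ¬ ∃ u ∈ D, G'.Adj u v) with hRsc
  have hdom : G'.IsDominatingSet (D ∪ Rsc) := by
    intro v
    by_cases hv : v ∈ D ∪ Rsc
    · exact Or.inl hv
    · right
      rw [mem_union, hRsc, mem_filter] at hv
      push_neg at hv
      obtain ⟨hvD, hv2⟩ := hv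
      obtain ⟨u, hu, hadj⟩ := hv2 (mem_univ v) hvD
      exact ⟨u, mem_union_left _ hu, hadj⟩
  -- each rescued vertex yields a distinct deleted edge
  have hP : ∀ v ∈ Rsc, ∃ u, u ∈ D ∧ G.Adj u v ∧ s(u, v) ∈ E' := by
    intro v hv
    rw [hRsc, mem_filter] at hv
    obtain ⟨-, hvD, hno⟩ := hv
    rcases hD v with h | ⟨u, hu, hadj⟩
    · exact absurd h hvD
    · refine ⟨u, hu, hadj, ?_⟩
      by_contra hne
      exact hno ⟨u, hu, by rw [hG', SimpleGraph.deleteEdges_adj]; exact ⟨hadj, hne⟩⟩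
  have hcardRsc : Rsc.card ≤ E'.card := by
    set f : V → Sym2 V := fun v => if h : ∃ u, u ∈ D ∧ G.Adj u v ∧ s(u, v) ∈ E'
      then s(h.choose, v) else s(v, v) with hf
    apply Finset.card_le_card_of_injOn f
    · intro v hv
      obtain ⟨u, hu⟩ := hP v hv
      have hex : ∃ u, u ∈ D ∧ G.Adj u v ∧ s(u, v) ∈ E' := ⟨u, hu⟩
      simp only [hf, dif_pos hex]
      exact hex.choose_spec.2.2
    · intro v hv w hw hvw
      have hexv := hP v hv
      have hexw := hP w hw
      have hvD : v ∉ D := by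
        have := Finset.mem_coe.mp hv; rw [hRsc, mem_filter] at this; exact this.2.1
      have hwD : w ∉ D := by
        have := Finset.mem_coe.mp hw; rw [hRsc, mem_filter] at this; exact this.2.1
      simp only [hf, dif_pos hexv, dif_pos hexw] at hvw
      rcases Sym2.eq_iff.mp hvw with ⟨-, h⟩ | ⟨h1, h2⟩
      · exact h
      · exact absurd (h1 ▸ hexv.choose_spec.1) hwD
  calc G'.domNum ≤ (D ∪ Rsc).card := domNum_le _ hdom
    _ ≤ D.card + Rsc.card := card_union_le _ _
    _ ≤ G.domNum + E'.card := by omega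

/-- let `R` be a nonempty set of vertices each adjacent to at least two
vertices of degree one, and let `A` be the set of degree-one vertices adjacent to some
vertex of `R`.  Then `Sb_{|A|−|R|}(G) = |A| − |R|`. -/
theorem synchBondage_of_pendants {V : Type*} [Fintype V] [DecidableEq V]
    (G : SimpleGraph V) [DecidableRel G.Adj] (R : Finset V) (hR : R.Nonempty)
    (hpend : ∀ r ∈ R, ∃ a b : V, a ≠ b ∧ G.Adj r a ∧ G.Adj r b ∧
      G.degree a = 1 ∧ G.degree b = 1)
    (A : Finset V)
    (hA : ∀ a : V, a ∈ A ↔ (G.degree a = 1 ∧ ∃ r ∈ R, G.Adj r a)) :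
    G.synchBondage (A.card - R.card) = A.card - R.card := by
  classical
  -- uniqueness of the neighbor of a degree-one vertex
  have huniq : ∀ a u w : V, G.degree a = 1 → G.Adj u a → G.Adj w a → u = w := by
    intro a u w hdeg hu hw
    have h1 : u ∈ G.neighborFinset a := (G.mem_neighborFinset a u).mpr hu.symm
    have h2 : w ∈ G.neighborFinset a := (G.mem_neighborFinset a w).mpr hw.symm
    exact Finset.card_le_one.mp (le_of_eq hdeg) u h1 w h2
  -- vertices of R are not in A
  have hRnA : ∀ r ∈ R, r ∉ A := by
    intro r hr hrA
    obtain ⟨a, b, hab, hra, hrb, -, -⟩ := hpend r hr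
    exact hab (huniq r a b ((hA r).1 hrA).1 hra.symm hrb.symm)
  -- the unique neighbor of a vertex of A
  set ra : V → V := fun a => if h : a ∈ A then ((hA a).1 h).2.choose else a with hra_def
  have hraR : ∀ a ∈ A, ra a ∈ R ∧ G.Adj (ra a) a := by
    intro a ha
    simp only [hra_def, dif_pos ha]
    exact ⟨((hA a).1 ha).2.choose_spec.1, ((hA a).1 ha).2.choose_spec.2⟩
  have hra_uniq : ∀ a ∈ A, ∀ u, G.Adj u a → u = ra a := fun a ha u hu =>
    huniq a u (ra a) ((hA a).1 ha).1 hu (hraR a ha).2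
  -- a chosen pendant of each vertex of R
  set pa : V → V := fun r => if h : r ∈ R then (hpend r h).choose else r with hpa_def
  have hpaA : ∀ r ∈ R, pa r ∈ A ∧ G.Adj r (pa r) := by
    intro r hr
    obtain ⟨b, hne, hadj, hb, hdeg, hdegb⟩ := (hpend r hr).choose_spec
    simp only [hpa_def, dif_pos hr]
    exact ⟨(hA _).2 ⟨hdeg, r, hr, hadj⟩, hadj⟩
  have hpa_ra : ∀ r ∈ R, ra (pa r) = r := fun r hr =>
    (hra_uniq _ (hpaA r hr).1 r (hpaA r hr).2).symm
  have hpa_inj : ∀ r ∈ R, ∀ r' ∈ R, pa r = pa r' → r = r' := by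
    intro r hr r' hr' h
    rw [← hpa_ra r hr, ← hpa_ra r' hr', h]
  set S : Finset V := R.image pa with hS
  set B : Finset V := A \ S with hB
  have hSsub : S ⊆ A := by
    intro x hx
    obtain ⟨r, hr, rfl⟩ := Finset.mem_image.mp hx
    exact (hpaA r hr).1
  have hScard : S.card = R.card := Finset.card_image_of_injOn hpa_inj
  have hBcard : B.card = A.card - R.card := by
    rw [hB, Finset.card_sdiff_of_subset hSsub, hScard]
  set E' : Finset (Sym2 V) := B.image (fun a => s(a, ra a)) with hE'
  have hE'sub : ↑E' ⊆ G.edgeSet := by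
    intro e he
    rw [Finset.mem_coe, hE', Finset.mem_image] at he
    obtain ⟨a, ha, rfl⟩ := he
    exact G.mem_edgeSet.mpr ((hraR a (Finset.mem_sdiff.mp ha).1).2).symm
  have hE'card : E'.card = B.card := by
    rw [hE']
    apply Finset.card_image_of_injOn
    intro a ha a' ha' h
    rcases Sym2.eq_iff.mp h with ⟨h1, -⟩ | ⟨h1, -⟩
    · exact h1
    · exact absurd ((Finset.mem_sdiff.mp ha).1)
        (by rw [h1]; exact hRnA _ (hraR a' (Finset.mem_sdiff.mp (Finset.mem_coe.mp ha')).1).1)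
  set G' := G.deleteEdges (↑E' : Set (Sym2 V)) with hG'
  -- vertices of B are isolated in G'
  have hdelB : ∀ a ∈ B, ∀ u, ¬ G'.Adj u a := by
    intro a ha u hadj
    rw [hG', SimpleGraph.deleteEdges_adj] at hadj
    have haA : a ∈ A := (Finset.mem_sdiff.mp ha).1
    have hu : u = ra a := hra_uniq a haA u hadj.1
    apply hadj.2
    rw [hu, Sym2.eq_swap]
    exact Finset.mem_coe.mpr (Finset.mem_image_of_mem _ ha)
  -- the edge from r to its chosen pendant survives
  have hkeep : ∀ r ∈ R, G'.Adj r (pa r) := by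
    intro r hr
    rw [hG', SimpleGraph.deleteEdges_adj]
    refine ⟨(hpaA r hr).2, fun hmem => ?_⟩
    rw [Finset.mem_coe, hE', Finset.mem_image] at hmem
    obtain ⟨a, haB, heq⟩ := hmem
    rcases Sym2.eq_iff.mp heq with ⟨h1, -⟩ | ⟨h1, -⟩
    · exact hRnA r hr (h1 ▸ (Finset.mem_sdiff.mp haB).1)
    · exact (Finset.mem_sdiff.mp haB).2 (by rw [h1]; exact Finset.mem_image_of_mem pa hr)
  -- edges not touching A ∪ ... survive
  have hsurv : ∀ u v : V, u ∉ A → v ∉ A → G.Adj u v → G'.Adj u v := by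
    intro u v huA hvA hadj
    rw [hG', SimpleGraph.deleteEdges_adj]
    refine ⟨hadj, fun hmem => ?_⟩
    rw [Finset.mem_coe, hE', Finset.mem_image] at hmem
    obtain ⟨a, haB, heq⟩ := hmem
    rcases Sym2.eq_iff.mp heq with ⟨h1, -⟩ | ⟨h1, -⟩
    · exact huA (h1 ▸ (Finset.mem_sdiff.mp haB).1)
    · exact hvA (h1 ▸ (Finset.mem_sdiff.mp haB).1)
  have hG'le : ∀ u v : V, G'.Adj u v → G.Adj u v := by
    intro u v h
    rw [hG', SimpleGraph.deleteEdges_adj] at h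
    exact h.1
  -- a generic subset fact
  have hsub2 : ∀ D : Finset V, (D \ A) ∪ R ⊆ (D \ A) ∪ (R \ D) := by
    intro D x hx
    rcases Finset.mem_union.mp hx with h | h
    · exact Finset.mem_union_left _ h
    · by_cases hxD : x ∈ D
      · exact Finset.mem_union_left _ (Finset.mem_sdiff.mpr ⟨hxD, hRnA x h⟩)
      · exact Finset.mem_union_right _ (Finset.mem_sdiff.mpr ⟨h, hxD⟩)
  -- upper bound : γ(G') ≤ γ(G) + |B|
  have hupper : G'.domNum ≤ G.domNum + B.card := by
    obtain ⟨D, hD, hcard⟩ := domNum_spec G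
    set D₂ : Finset V := (D \ A) ∪ R with hD₂
    have hinj : (R \ D).card ≤ (D ∩ A).card := by
      apply Finset.card_le_card_of_injOn pa
      · intro r hr
        have hrR := (Finset.mem_sdiff.mp hr).1
        have hrD := (Finset.mem_sdiff.mp hr).2
        have hpaD : pa r ∈ D := by
          rcases hD (pa r) with h | ⟨u, hu, hadj⟩
          · exact h
          · have : u = r := (hra_uniq _ (hpaA r hrR).1 u hadj).trans (hpa_ra r hrR)
            exact absurd (this ▸ hu) hrD
        exact Finset.mem_inter.mpr ⟨hpaD, (hpaA r hrR).1⟩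
      · intro r hr r' hr' h
        exact hpa_inj r (Finset.mem_sdiff.mp (Finset.mem_coe.mp hr)).1
          r' (Finset.mem_sdiff.mp (Finset.mem_coe.mp hr')).1 h
    have hD₂card : D₂.card ≤ D.card := by
      have c1 : D₂.card ≤ (D \ A).card + (R \ D).card :=
        le_trans (Finset.card_le_card (hsub2 D)) (Finset.card_union_le _ _)
      have c2 := Finset.card_sdiff_add_card_inter D A
      omega
    have hdom : G'.IsDominatingSet (D₂ ∪ B) := by
      intro v
      by_cases hvB : v ∈ B
      · exact Or.inl (Finset.mem_union_right _ hvB)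
      by_cases hvA : v ∈ A
      · have hvS : v ∈ S := by
          by_contra hvS
          exact hvB (Finset.mem_sdiff.mpr ⟨hvA, hvS⟩)
        obtain ⟨r, hrR, hrv⟩ := Finset.mem_image.mp hvS
        exact Or.inr ⟨r, Finset.mem_union_left _ (Finset.mem_union_right _ hrR),
          hrv ▸ hkeep r hrR⟩
      rcases hD v with hvD | ⟨u, hu, hadj⟩
      · exact Or.inl (Finset.mem_union_left _
          (Finset.mem_union_left _ (Finset.mem_sdiff.mpr ⟨hvD, hvA⟩)))
      · by_cases huA : u ∈ A
        · have hvr : v = ra u := hra_uniq u huA v hadj.symm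
          exact Or.inl (Finset.mem_union_left _
            (Finset.mem_union_right _ (by rw [hvr]; exact (hraR u huA).1)))
        · exact Or.inr ⟨u, Finset.mem_union_left _
            (Finset.mem_union_left _ (Finset.mem_sdiff.mpr ⟨hu, huA⟩)), hsurv u v huA hvA hadj⟩
    have := domNum_le G' hdom
    have hc3 := Finset.card_union_le D₂ B
    omega
  -- lower bound : γ(G) + |B| ≤ γ(G')
  have hlower : G.domNum + B.card ≤ G'.domNum := by
    obtain ⟨D', hD', hc⟩ := domNum_spec G'
    rw [← hc]
    have hBD' : B ⊆ D' := by
      intro a ha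
      rcases hD' a with h | ⟨u, hu, hadj⟩
      · exact h
      · exact absurd hadj (hdelB a ha u)
    have hdom2 : G.IsDominatingSet ((D' \ A) ∪ R) := by
      intro v
      by_cases hvA : v ∈ A
      · exact Or.inr ⟨ra v, Finset.mem_union_right _ (hraR v hvA).1, (hraR v hvA).2⟩
      rcases hD' v with h | ⟨u, hu, hadj⟩
      · exact Or.inl (Finset.mem_union_left _ (Finset.mem_sdiff.mpr ⟨h, hvA⟩))
      · have hGadj : G.Adj u v := hG'le u v hadj
        by_cases huA : u ∈ A
        · have hvr : v = ra u := hra_uniq u huA v hGadj.symm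
          exact Or.inl (Finset.mem_union_right _ (by rw [hvr]; exact (hraR u huA).1))
        · exact Or.inr ⟨u, Finset.mem_union_left _ (Finset.mem_sdiff.mpr ⟨hu, huA⟩), hGadj⟩
    have h1 : G.domNum ≤ (D' \ A).card + (R \ D').card :=
      le_trans (domNum_le G hdom2)
        (le_trans (Finset.card_le_card (hsub2 D')) (Finset.card_union_le _ _))
    have h2 : (R \ D').card ≤ (D' ∩ S).card := by
      apply Finset.card_le_card_of_injOn pa
      · intro r hr
        have hrR := (Finset.mem_sdiff.mp hr).1
        have hrD := (Finset.mem_sdiff.mp hr).2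
        have hpaD : pa r ∈ D' := by
          rcases hD' (pa r) with h | ⟨u, hu, hadj⟩
          · exact h
          · have : u = r := (hra_uniq _ (hpaA r hrR).1 u (hG'le u _ hadj)).trans (hpa_ra r hrR)
            exact absurd (this ▸ hu) hrD
        exact Finset.mem_inter.mpr ⟨hpaD, Finset.mem_image_of_mem pa hrR⟩
      · intro r hr r' hr' h
        exact hpa_inj r (Finset.mem_sdiff.mp (Finset.mem_coe.mp hr)).1
          r' (Finset.mem_sdiff.mp (Finset.mem_coe.mp hr')).1 h
    have h3 : B.card + (D' ∩ S).card ≤ (D' ∩ A).card := by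
      have hdisj : Disjoint B (D' ∩ S) := Finset.disjoint_left.mpr
        (fun x hx hx2 => (Finset.mem_sdiff.mp hx).2 (Finset.mem_inter.mp hx2).2)
      have hsubU : B ∪ (D' ∩ S) ⊆ D' ∩ A := by
        intro x hx
        rcases Finset.mem_union.mp hx with h | h
        · exact Finset.mem_inter.mpr ⟨hBD' h, (Finset.mem_sdiff.mp h).1⟩
        · exact Finset.mem_inter.mpr ⟨(Finset.mem_inter.mp h).1, hSsub (Finset.mem_inter.mp h).2⟩
      calc B.card + (D' ∩ S).card = (B ∪ (D' ∩ S)).card :=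
            (Finset.card_union_of_disjoint hdisj).symm
        _ ≤ (D' ∩ A).card := Finset.card_le_card hsubU
    have h4 := Finset.card_sdiff_add_card_inter D' A
    omega
  -- conclude
  have hk : B.card = A.card - R.card := hBcard
  have hEq : (G.deleteEdges (↑E' : Set (Sym2 V))).domNum = G.domNum + (A.card - R.card) := by
    rw [← hG']; omega
  have hmem : (A.card - R.card) ∈ {m : ℕ | ∃ E₀ : Finset (Sym2 V), ↑E₀ ⊆ G.edgeSet ∧
      (G.deleteEdges ↑E₀).domNum = G.domNum + (A.card - R.card) ∧ E₀.card = m} :=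
    ⟨E', hE'sub, hEq, by omega⟩
  have hLB : ∀ m ∈ {m : ℕ | ∃ E₀ : Finset (Sym2 V), ↑E₀ ⊆ G.edgeSet ∧
      (G.deleteEdges ↑E₀).domNum = G.domNum + (A.card - R.card) ∧ E₀.card = m},
      A.card - R.card ≤ m := by
    rintro m ⟨E₀, hsub, hdn, rfl⟩
    have := domNum_deleteEdges_le G E₀
    omega
  unfold SimpleGraph.synchBondage
  exact le_antisymm (Nat.sInf_le hmem) (hLB _ (Nat.sInf_mem ⟨_, hmem⟩))
end

section
/- If T is a nontrivial tree (a connected acyclic finite simple graph with at least 2 vertices), then b(T) ≤ 2; that is, there exists a set E' of at most 2 edges of T with γ(T − E') = γ(T) + 1. -/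
namespace SimpleGraph

section DomLemmas

variable {V : Type*}

lemma aux_domNum_set_nonempty [Fintype V] (G : SimpleGraph V) :
    {n : ℕ | ∃ D : Finset V, G.IsDominatingSet D ∧ D.card = n}.Nonempty :=
  ⟨_, Finset.univ, fun v => Or.inl (Finset.mem_univ v), rfl⟩

lemma aux_exists_domNum [Fintype V] (G : SimpleGraph V) :
    ∃ D : Finset V, G.IsDominatingSet D ∧ D.card = G.domNum :=
  Nat.sInf_mem G.aux_domNum_set_nonempty

lemma aux_domNum_le [Fintype V] {G : SimpleGraph V} {D : Finset V}
    (hD : G.IsDominatingSet D) : G.domNum ≤ D.card := Nat.sInf_le ⟨D, hD, rfl⟩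

lemma aux_IsDominatingSet.mono {G H : SimpleGraph V} {D : Finset V} (hle : G ≤ H)
    (hD : G.IsDominatingSet D) : H.IsDominatingSet D := fun v =>
  (hD v).imp id (fun ⟨u, hu, ha⟩ => ⟨u, hu, hle ha⟩)

lemma aux_domNum_le_of_le [Fintype V] {G H : SimpleGraph V} (hle : G ≤ H) :
    H.domNum ≤ G.domNum := by
  obtain ⟨D, hD, hcard⟩ := G.aux_exists_domNum
  exact hcard ▸ aux_domNum_le (aux_IsDominatingSet.mono hle hD)

lemma aux_domNum_pos [Fintype V] [Nonempty V] (G : SimpleGraph V) : 0 < G.domNum := by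
  obtain ⟨D, hD, hc⟩ := G.aux_exists_domNum
  rw [← hc, Finset.card_pos]
  rcases hD (Classical.arbitrary V) with h | ⟨u, hu, _⟩
  exacts [⟨_, h⟩, ⟨u, hu⟩]

lemma aux_domNum_deleteEdge_le [Fintype V] (G : SimpleGraph V) (a b : V) :
    (G.deleteEdges {s(a,b)}).domNum ≤ G.domNum + 1 := by
  classical
  obtain ⟨D, hD, hcard⟩ := G.aux_exists_domNum
  set G' := G.deleteEdges {s(a,b)} with hG'
  have hkey : ∀ x y, G.Adj x y → s(x,y) ≠ s(a,b) → G'.Adj x y := by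
    intro x y hxy hne
    rw [hG', deleteEdges_adj]
    exact ⟨hxy, by simpa using hne⟩
  have hdone : ∀ c : V, G'.IsDominatingSet (insert c D) → G'.domNum ≤ G.domNum + 1 := by
    intro c hdom
    calc G'.domNum ≤ (insert c D).card := aux_domNum_le hdom
      _ ≤ D.card + 1 := Finset.card_insert_le _ _
      _ = G.domNum + 1 := by rw [hcard]
  by_cases hcase : a ∈ D ∨ ∃ d ∈ D, d ≠ b ∧ G.Adj d a
  · apply hdone b
    intro y
    rcases hD y with hy | ⟨d, hd, hady⟩
    · exact Or.inl (Finset.mem_insert_of_mem hy)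
    · by_cases he : s(d, y) = s(a, b)
      · rcases Sym2.eq_iff.mp he with ⟨rfl, rfl⟩ | ⟨rfl, rfl⟩
        · exact Or.inl (Finset.mem_insert_self _ _)
        · rcases hcase with ha | ⟨d', hd', hne, hadj⟩
          · exact Or.inl (Finset.mem_insert_of_mem ha)
          · refine Or.inr ⟨d', Finset.mem_insert_of_mem hd', hkey _ _ hadj ?_⟩
            intro h
            rcases Sym2.eq_iff.mp h with ⟨rfl, h2⟩ | ⟨h1, h2⟩
            · exact hadj.ne rfl
            · exact hne h1
      · exact Or.inr ⟨d, Finset.mem_insert_of_mem hd, hkey _ _ hady he⟩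
  · push_neg at hcase
    obtain ⟨haD, hnoadj⟩ := hcase
    apply hdone a
    intro y
    rcases hD y with hy | ⟨d, hd, hady⟩
    · exact Or.inl (Finset.mem_insert_of_mem hy)
    · by_cases he : s(d, y) = s(a, b)
      · rcases Sym2.eq_iff.mp he with ⟨rfl, rfl⟩ | ⟨rfl, rfl⟩
        · exact absurd hd haD
        · exact Or.inl (Finset.mem_insert_self _ _)
      · exact Or.inr ⟨d, Finset.mem_insert_of_mem hd, hkey _ _ hady he⟩

end DomLemmas

section TreeLemmas

set_option linter.unusedSectionVars false

variable {V : Type*} [DecidableEq V] {T : SimpleGraph V}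

lemma aux_exists_isPath_length_dist (hconn : T.Connected) (x y : V) :
    ∃ p : T.Walk x y, p.IsPath ∧ p.length = T.dist x y := by
  obtain ⟨w, hw⟩ := hconn.exists_walk_length_eq_dist x y
  refine ⟨w.bypass, w.bypass_isPath, le_antisymm ?_ (T.dist_le _)⟩
  calc w.bypass.length ≤ w.length := Walk.length_bypass_le w
    _ = _ := hw

lemma aux_not_mem_support_of_length_lt {r a c : V} (p : T.Walk r a)
    (h : p.length < T.dist r c) : c ∉ p.support := by
  intro hc
  have h1 := T.dist_le (p.takeUntil c hc)
  have hsum : (p.takeUntil c hc).length + (p.dropUntil c hc).length = p.length := by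
    rw [← Walk.length_append, Walk.take_spec]
  omega

lemma aux_adj_dist_ne (hconn : T.Connected) (hacyc : T.IsAcyclic) (r : V) {x y : V}
    (hxy : T.Adj x y) : T.dist r x ≠ T.dist r y := by
  intro heq
  obtain ⟨p, hp, hpl⟩ := aux_exists_isPath_length_dist hconn r x
  by_cases hy : y ∈ p.support
  · have h1 := T.dist_le (p.takeUntil y hy)
    have hsum : (p.takeUntil y hy).length + (p.dropUntil y hy).length = p.length := by
      rw [← Walk.length_append, Walk.take_spec]
    have hne : (p.dropUntil y hy).length ≠ 0 := fun h0 =>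
      hxy.ne' (Walk.eq_of_length_eq_zero h0)
    omega
  · have hQ : (Walk.cons hxy.symm p.reverse).IsPath :=
      hp.reverse.cons (by simpa [Walk.support_reverse] using hy)
    obtain ⟨q, hq, hql⟩ := aux_exists_isPath_length_dist hconn r y
    have huniq := isAcyclic_iff_path_unique.mp hacyc
      ⟨Walk.cons hxy.symm p.reverse, hQ⟩ ⟨q.reverse, hq.reverse⟩
    have hlen := congrArg Walk.length (congrArg Subtype.val huniq)
    simp only [Walk.length_cons, Walk.length_reverse] at hlen
    omega

lemma aux_parent_unique (hconn : T.Connected) (hacyc : T.IsAcyclic) (r : V) {a b c : V}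
    (hac : T.Adj a c) (hbc : T.Adj b c)
    (hda : T.dist r a + 1 = T.dist r c) (hdb : T.dist r b + 1 = T.dist r c) : a = b := by
  obtain ⟨p, hp, hpl⟩ := aux_exists_isPath_length_dist hconn r a
  obtain ⟨q, hq, hql⟩ := aux_exists_isPath_length_dist hconn r b
  have hcp : c ∉ p.support := aux_not_mem_support_of_length_lt p (by omega)
  have hcq : c ∉ q.support := aux_not_mem_support_of_length_lt q (by omega)
  have P1 : (Walk.cons hac.symm p.reverse).IsPath :=
    hp.reverse.cons (by simpa [Walk.support_reverse] using hcp)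
  have P2 : (Walk.cons hbc.symm q.reverse).IsPath :=
    hq.reverse.cons (by simpa [Walk.support_reverse] using hcq)
  have huniq := isAcyclic_iff_path_unique.mp hacyc
    ⟨Walk.cons hac.symm p.reverse, P1⟩ ⟨Walk.cons hbc.symm q.reverse, P2⟩
  have hsupp := congrArg Walk.support (congrArg Subtype.val huniq)
  simp only [Walk.support_cons] at hsupp
  have h2 : p.reverse.support = q.reverse.support := by injection hsupp
  rw [p.reverse.support_eq_cons, q.reverse.support_eq_cons] at h2
  injection h2

lemma aux_exists_parent (hconn : T.Connected) {r x : V} (h : T.dist r x ≠ 0) :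
    ∃ p : V, T.Adj x p ∧ T.dist r p + 1 = T.dist r x := by
  obtain ⟨w, hwl⟩ := exists_walk_of_dist_ne_zero h
  have hnotnil : ¬ w.reverse.Nil := by
    rw [Walk.nil_iff_length_eq, Walk.length_reverse, hwl]
    exact h
  obtain ⟨z, hadj, q, hq⟩ := Walk.not_nil_iff.mp hnotnil
  refine ⟨z, hadj, ?_⟩
  have h1 : T.dist r z ≤ q.length := by
    rw [dist_comm]; exact T.dist_le q
  have h2 : q.length + 1 = T.dist r x := by
    have := congrArg Walk.length hq
    simp only [Walk.length_cons, Walk.length_reverse] at this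
    omega
  have h3 : T.dist r x ≤ T.dist r z + 1 := by
    have htri := hconn.dist_triangle (u := r) (v := z) (w := x)
    have : T.dist z x = 1 := dist_eq_one_iff_adj.mpr hadj.symm
    omega
  omega

end TreeLemmas

end SimpleGraph

open SimpleGraph

/-- a nontrivial tree has bondage number at most `2`; that is, some set of
at most two edges has deletion increasing the domination number by one. -/
theorem bondage_le_two_of_tree {V : Type*} [Fintype V] (T : SimpleGraph V)
    (hconn : T.Connected) (hacyc : T.IsAcyclic) (hnontrivial : 2 ≤ Fintype.card V) :
    (∃ E' : Finset (Sym2 V), ↑E' ⊆ T.edgeSet ∧ E'.card ≤ 2 ∧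
      (T.deleteEdges ↑E').domNum = T.domNum + 1) ∧
    T.synchBondage 1 ≤ 2 := by
  classical
  suffices h : ∃ E' : Finset (Sym2 V), ↑E' ⊆ T.edgeSet ∧ E'.card ≤ 2 ∧
      (T.deleteEdges ↑E').domNum = T.domNum + 1 by
    refine ⟨h, ?_⟩
    obtain ⟨E', hsub, hcard, hdom⟩ := h
    exact le_trans (Nat.sInf_le ⟨E', hsub, hdom, rfl⟩) hcard
  have hne : Nonempty V := Fintype.card_pos_iff.mp (by omega)
  obtain ⟨r⟩ := hne
  have : Nonempty V := ⟨r⟩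
  obtain ⟨u, -, hu⟩ := Finset.exists_max_image Finset.univ (T.dist r) ⟨r, Finset.mem_univ r⟩
  have humax : ∀ a : V, T.dist r a ≤ T.dist r u := fun a => hu a (Finset.mem_univ a)
  have hdu : T.dist r u ≠ 0 := by
    obtain ⟨x, hx⟩ := Fintype.exists_ne_of_one_lt_card (by omega) r
    have h1 := hconn.pos_dist_of_ne (Ne.symm hx)
    have h2 := humax x
    omega
  obtain ⟨v, huv, hdv⟩ := aux_exists_parent hconn hdu
  have hstep : ∀ x z : V, T.Adj x z →
      T.dist r z = T.dist r x + 1 ∨ T.dist r z + 1 = T.dist r x := by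
    intro x z h
    have h1 := hconn.dist_triangle (u := r) (v := x) (w := z)
    have h2 := hconn.dist_triangle (u := r) (v := z) (w := x)
    have h3 : T.dist x z = 1 := dist_eq_one_iff_adj.mpr h
    have h4 : T.dist z x = 1 := dist_eq_one_iff_adj.mpr h.symm
    have h5 := aux_adj_dist_ne hconn hacyc r h
    omega
  have hleaf_u : ∀ z, T.Adj z u → z = v := by
    intro z hz
    rcases hstep u z hz.symm with h | h
    · have := humax z; omega
    · exact aux_parent_unique hconn hacyc r hz huv.symm h hdv
  by_cases hvr : T.dist r v = 0
  · -- star case: v = r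
    have hveq : r = v := hconn.dist_eq_zero_iff.mp hvr
    subst hveq
    have hdu1 : T.dist r u = 1 := by
      have h0 : T.dist r r = 0 := by
        simp [SimpleGraph.dist_self]
      omega
    have hadj_all : ∀ y, y ≠ r → T.Adj r y := by
      intro y hy
      have h1 := hconn.pos_dist_of_ne (Ne.symm hy)
      have h2 := humax y
      have h3 : T.dist r y = 1 := by omega
      exact dist_eq_one_iff_adj.mp h3
    have hdomT : T.domNum = 1 := by
      refine le_antisymm ?_ (T.aux_domNum_pos)
      have hdom : T.IsDominatingSet {r} := by
        intro y
        by_cases hy : y = r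
        · exact Or.inl (by simp [hy])
        · exact Or.inr ⟨r, by simp, hadj_all y hy⟩
      simpa using aux_domNum_le hdom
    have hurne : u ≠ r := huv.ne
    have hiso : ∀ z, ¬ (T.deleteEdges {s(u,r)}).Adj z u := by
      intro z h
      rw [deleteEdges_adj] at h
      obtain ⟨h1, h2⟩ := h
      have := hleaf_u z h1
      subst this
      exact h2 (by simp [Sym2.eq_swap])
    have hG1dom : (T.deleteEdges {s(u,r)}).domNum = 2 := by
      refine le_antisymm ?_ ?_
      · have hdom : (T.deleteEdges {s(u,r)}).IsDominatingSet {u, r} := by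
          intro y
          by_cases hy1 : y = u
          · exact Or.inl (by simp [hy1])
          · by_cases hy2 : y = r
            · exact Or.inl (by simp [hy2])
            · refine Or.inr ⟨r, by simp, ?_⟩
              rw [deleteEdges_adj]
              refine ⟨hadj_all y hy2, ?_⟩
              simp only [Set.mem_singleton_iff]
              intro h
              rcases Sym2.eq_iff.mp h with ⟨h1, h2⟩ | ⟨h1, h2⟩
              · exact hy2 h2
              · exact hy1 h2
        calc (T.deleteEdges {s(u,r)}).domNum ≤ ({u, r} : Finset V).card :=
              aux_domNum_le hdom
          _ ≤ 2 := by
              refine le_trans (Finset.card_insert_le _ _) ?_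
              simp
      · obtain ⟨D, hD, hc⟩ := (T.deleteEdges {s(u,r)}).aux_exists_domNum
        rw [← hc]
        have huD : u ∈ D := by
          rcases hD u with h | ⟨z, hz, hadj⟩
          · exact h
          · exact absurd hadj (hiso z)
        rcases hD r with h | ⟨z, hz, hadj⟩
        · exact Finset.one_lt_card.mpr ⟨u, huD, r, h, hurne⟩
        · have hzu : z ≠ u := by
            intro h; subst h
            exact hiso r hadj.symm
          exact Finset.one_lt_card.mpr ⟨u, huD, z, hz, Ne.symm hzu⟩
    refine ⟨{s(u,r)}, ?_, ?_, ?_⟩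
    · simp [Set.singleton_subset_iff, huv]
    · simp
    · rw [Finset.coe_singleton, hG1dom, hdomT]
  · -- main case
    obtain ⟨w, hvw, hdw⟩ := aux_exists_parent hconn hvr
    have huv_ne : u ≠ v := huv.ne
    have hvw_ne : v ≠ w := hvw.ne
    have huw_ne : u ≠ w := by
      intro h
      rw [h] at hdv
      omega
    set L : Finset V := T.neighborFinset v \ {u, w} with hLdef
    have hL : ∀ ℓ ∈ L, T.Adj v ℓ ∧ ℓ ≠ u ∧ ℓ ≠ w := by
      intro ℓ hℓ
      rw [hLdef, Finset.mem_sdiff, mem_neighborFinset] at hℓ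
      simp only [Finset.mem_insert, Finset.mem_singleton] at hℓ
      tauto
    have hLdist : ∀ ℓ ∈ L, T.dist r ℓ = T.dist r v + 1 := by
      intro ℓ hℓ
      obtain ⟨hadj, hℓu, hℓw⟩ := hL ℓ hℓ
      rcases hstep v ℓ hadj with h | h
      · exact h
      · exact absurd (aux_parent_unique hconn hacyc r hadj.symm hvw.symm h hdw) hℓw
    have hleaf_L : ∀ ℓ ∈ L, ∀ z, T.Adj z ℓ → z = v := by
      intro ℓ hℓ z hz
      obtain ⟨hadj, hℓu, hℓw⟩ := hL ℓ hℓ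
      have hdℓ := hLdist ℓ hℓ
      rcases hstep ℓ z hz.symm with h | h
      · have := humax z; omega
      · exact aux_parent_unique hconn hacyc r hz hadj (by omega) (by omega)
    have hNv : ∀ y, T.Adj v y → y = u ∨ y = w ∨ y ∈ L := by
      intro y hy
      by_cases h1 : y = u
      · exact Or.inl h1
      · by_cases h2 : y = w
        · exact Or.inr (Or.inl h2)
        · refine Or.inr (Or.inr ?_)
          rw [hLdef, Finset.mem_sdiff, mem_neighborFinset]
          simp [hy, h1, h2]
    have hG1le := aux_domNum_deleteEdge_le T u v
    have hG1ge : T.domNum ≤ (T.deleteEdges {s(u,v)}).domNum :=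
      aux_domNum_le_of_le (deleteEdges_le _)
    by_cases hA : (T.deleteEdges {s(u,v)}).domNum = T.domNum + 1
    · refine ⟨{s(u,v)}, ?_, ?_, ?_⟩
      · simp [Set.singleton_subset_iff, huv]
      · simp
      · rw [Finset.coe_singleton]; exact hA
    · have hB : (T.deleteEdges {s(u,v)}).domNum = T.domNum := by omega
      have hG2eq : T.deleteEdges {s(u,v), s(v,w)} =
          (T.deleteEdges {s(u,v)}).deleteEdges {s(v,w)} := by
        rw [deleteEdges_deleteEdges, Set.singleton_union]
      have hup : (T.deleteEdges {s(u,v), s(v,w)}).domNum ≤ T.domNum + 1 := by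
        rw [hG2eq]
        calc ((T.deleteEdges {s(u,v)}).deleteEdges {s(v,w)}).domNum
            ≤ (T.deleteEdges {s(u,v)}).domNum + 1 := aux_domNum_deleteEdge_le _ v w
          _ = T.domNum + 1 := by rw [hB]
      have hG2adj : ∀ x y : V, (T.deleteEdges {s(u,v), s(v,w)}).Adj x y ↔
          T.Adj x y ∧ s(x,y) ≠ s(u,v) ∧ s(x,y) ≠ s(v,w) := by
        intro x y
        rw [deleteEdges_adj]
        simp only [Set.mem_insert_iff, Set.mem_singleton_iff, not_or]
      have hlow : ∀ D2 : Finset V, (T.deleteEdges {s(u,v), s(v,w)}).IsDominatingSet D2 →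
          T.domNum + 1 ≤ D2.card := by
        intro D2 hD2
        have huD2 : u ∈ D2 := by
          rcases hD2 u with h | ⟨z, hz, hadj⟩
          · exact h
          · exfalso
            rw [hG2adj] at hadj
            obtain ⟨h1, h2, h3⟩ := hadj
            have hz_eq : z = v := hleaf_u z h1
            subst hz_eq
            exact h2 Sym2.eq_swap
        obtain ⟨x, hxD2, hxS⟩ : ∃ x ∈ D2, x = v ∨ x ∈ L := by
          rcases hD2 v with h | ⟨z, hz, hadj⟩
          · exact ⟨v, h, Or.inl rfl⟩
          · rw [hG2adj] at hadj
            obtain ⟨h1, h2, h3⟩ := hadj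
            refine ⟨z, hz, Or.inr ?_⟩
            rcases hNv z h1.symm with rfl | rfl | hL'
            · exact absurd rfl h2
            · exact absurd Sym2.eq_swap h3
            · exact hL'
        set S : Finset V := insert u (insert v L) with hSdef
        have hmemS : ∀ y, y ∈ S ↔ y = u ∨ y = v ∨ y ∈ L := by
          intro y; simp [hSdef]
        have hxu : x ≠ u := by
          rcases hxS with rfl | h
          · exact Ne.symm huv_ne
          · exact (hL x h).2.1
        have h2card : 2 ≤ (D2 ∩ S).card := by
          refine Finset.one_lt_card.mpr ⟨u, ?_, x, ?_, Ne.symm hxu⟩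
          · exact Finset.mem_inter.mpr ⟨huD2, (hmemS u).mpr (Or.inl rfl)⟩
          · refine Finset.mem_inter.mpr ⟨hxD2, (hmemS x).mpr (Or.inr hxS)⟩
        have hD3c : (insert v (D2 \ S)).card + 1 ≤ D2.card := by
          have h1 := Finset.card_insert_le v (D2 \ S)
          have h2 := Finset.card_sdiff_add_card_inter D2 S
          omega
        have hSclosed : ∀ z ∈ S, ∀ y, (T.deleteEdges {s(u,v), s(v,w)}).Adj z y → y ∈ S := by
          intro z hzS y hadj
          rw [hG2adj] at hadj
          obtain ⟨h1, h2, h3⟩ := hadj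
          rcases (hmemS z).mp hzS with rfl | rfl | hzL
          · have hyv : y = v := hleaf_u y h1.symm
            rw [hyv] at h2
            exact absurd rfl h2
          · rcases hNv y h1 with rfl | rfl | hyL
            · exact absurd Sym2.eq_swap h2
            · exact absurd rfl h3
            · exact (hmemS y).mpr (Or.inr (Or.inr hyL))
          · have hyv : y = v := hleaf_L z hzL y h1.symm
            rw [hyv]
            exact (hmemS v).mpr (Or.inr (Or.inl rfl))
        have hD3dom : T.IsDominatingSet (insert v (D2 \ S)) := by
          intro y
          by_cases hyS : y ∈ S
          · rcases (hmemS y).mp hyS with rfl | rfl | hyL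
            · exact Or.inr ⟨v, Finset.mem_insert_self _ _, huv.symm⟩
            · exact Or.inl (Finset.mem_insert_self _ _)
            · exact Or.inr ⟨v, Finset.mem_insert_self _ _, (hL y hyL).1⟩
          · rcases hD2 y with h | ⟨z, hz, hadj⟩
            · exact Or.inl (Finset.mem_insert_of_mem (Finset.mem_sdiff.mpr ⟨h, hyS⟩))
            · have hzS : z ∉ S := fun hzS => hyS (hSclosed z hzS y hadj)
              exact Or.inr ⟨z, Finset.mem_insert_of_mem (Finset.mem_sdiff.mpr ⟨hz, hzS⟩),
                (deleteEdges_le _) hadj⟩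
        have := aux_domNum_le hD3dom
        omega
      have hdown : T.domNum + 1 ≤ (T.deleteEdges {s(u,v), s(v,w)}).domNum := by
        obtain ⟨D2, hD2, hc⟩ := (T.deleteEdges {s(u,v), s(v,w)}).aux_exists_domNum
        exact hc ▸ hlow D2 hD2
      refine ⟨{s(u,v), s(v,w)}, ?_, ?_, ?_⟩
      · intro e he
        simp only [Finset.coe_insert, Finset.coe_singleton, Set.mem_insert_iff,
          Set.mem_singleton_iff] at he
        rcases he with rfl | rfl
        · exact huv
        · exact hvw
      · exact le_trans (Finset.card_insert_le _ _) (by simp)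
      · have hcoe : (↑({s(u,v), s(v,w)} : Finset (Sym2 V)) : Set (Sym2 V)) =
            {s(u,v), s(v,w)} := by simp
        rw [hcoe]
        exact le_antisymm hup hdown
end
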